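/- For nonnegative integers n, k with n ≤ 2^k, D(2^(k+1) + n − 1) = 2^k − n + D(2^k + n − 1). -/

import Mathlib

/-!
For `n < 2 ^ k` the binary expansion of `2 ^ k + n` is that of `n`, padded with zeros to length
`k`, followed by a leading `1`; so passing from `2 ^ k + n` to `2 ^ (k + 1) + n` adds exactly one
digit `0`, and `f` drops by `1`. Adding the terms `m = 2 ^ k + j` and `m = 2 ^ (k + 1) + j` one at
a time (induction on `n`) reduces the claim to `n = 0`, where both sides are known:
`D (2 ^ k - 1) = 2 ^ k - 1` follows from `D (2 m + 1) = 2 D m + 1`, because the pair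
`2 j, 2 j + 1` contributes `(f j - 1) + (f j + 1)`.
-/

/-- f m = (#1 digits) - (#0 digits) in the binary expansion of m. -/
def f (m : ℕ) : ℤ :=
  2 * ((Nat.digits 2 m).count 1 : ℤ) - ((Nat.digits 2 m).length : ℤ)

/-- Cumulated deficient binary digit sum (OEIS A268289), D 0 = 0. -/
def D (n : ℕ) : ℤ := ∑ m ∈ Finset.Icc 1 n, f m

theorem Nat.digits_two_two_pow_add {k n : ℕ} (hn : n < 2 ^ k) :
    digits 2 (2 ^ k + n) = digits 2 n ++ List.replicate (k - (digits 2 n).length) 0 ++ [1] := by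
  have hlen : (digits 2 n).length ≤ k := (digits_length_le_iff one_lt_two n).2 hn
  rw [← digits_of_lt 2 1 one_ne_zero one_lt_two,
    digits_append_zeroes_append_digits one_lt_two one_pos, Nat.add_sub_cancel' hlen, mul_one,
    add_comm]

theorem f_two_pow_add {k n : ℕ} (hn : n < 2 ^ k) :
    f (2 ^ k + n) = 2 * (Nat.digits 2 n).count 1 + 1 - k := by
  have hlen : (Nat.digits 2 n).length ≤ k := (Nat.digits_length_le_iff one_lt_two n).2 hn
  simp only [f, Nat.digits_two_two_pow_add hn, List.count_append, List.count_replicate,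
    List.count_singleton_self, List.length_append, List.length_replicate, List.length_singleton,
    Nat.add_sub_cancel' hlen]
  push_cast
  ring

theorem f_two_pow_succ_add {k n : ℕ} (hn : n < 2 ^ k) :
    f (2 ^ (k + 1) + n) = f (2 ^ k + n) - 1 := by
  rw [f_two_pow_add hn, f_two_pow_add (hn.trans (Nat.pow_lt_pow_succ one_lt_two))]
  push_cast
  ring

theorem f_two_mul {m : ℕ} (hm : m ≠ 0) : f (2 * m) = f m - 1 := by
  have h := Nat.digits_add 2 one_lt_two 0 m two_pos (Or.inr hm)
  rw [zero_add] at h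
  rw [f, f, h, List.count_cons_of_ne zero_ne_one, List.length_cons]
  push_cast
  ring

theorem f_two_mul_add_one (m : ℕ) : f (2 * m + 1) = f m + 1 := by
  have h := Nat.digits_add 2 one_lt_two 1 m one_lt_two (Or.inl one_ne_zero)
  rw [add_comm] at h
  rw [f, f, h, List.count_cons_self, List.length_cons]
  push_cast
  ring

theorem D_succ (n : ℕ) : D (n + 1) = D n + f (n + 1) :=
  Finset.sum_Icc_succ_top (by omega) f

theorem D_two_mul_add_one (n : ℕ) : D (2 * n + 1) = 2 * D n + 1 := by
  induction n with
  | zero => simp [D, f]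
  | succ n ih =>
    rw [show 2 * (n + 1) + 1 = 2 * n + 1 + 1 + 1 by ring, D_succ, D_succ, ih,
      show 2 * n + 1 + 1 = 2 * (n + 1) by ring, f_two_mul n.succ_ne_zero, f_two_mul_add_one,
      D_succ]
    ring

theorem D_two_pow_sub_one (k : ℕ) : D (2 ^ k - 1) = 2 ^ k - 1 := by
  induction k with
  | zero => simp [D]
  | succ k ih =>
    have hodd : 2 ^ (k + 1) - 1 = 2 * (2 ^ k - 1) + 1 := by
      have := k.one_le_two_pow
      omega
    rw [hodd, D_two_mul_add_one, ih]
    ring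

theorem D_two_pow_succ_sub_one_add {k n : ℕ} (hn : n ≤ 2 ^ k) :
    D (2 ^ (k + 1) - 1 + n) = 2 ^ k - n + D (2 ^ k - 1 + n) := by
  induction n with
  | zero =>
    rw [add_zero, add_zero, D_two_pow_sub_one, D_two_pow_sub_one]
    ring
  | succ n ih =>
    have h₁ : 2 ^ (k + 1) - 1 + n + 1 = 2 ^ (k + 1) + n := by
      have := (k + 1).one_le_two_pow
      omega
    have h₀ : 2 ^ k - 1 + n + 1 = 2 ^ k + n := by
      have := k.one_le_two_pow
      omega
    rw [← add_assoc, ← add_assoc, D_succ, D_succ, h₁, h₀, f_two_pow_succ_add (by omega),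
      ih (by omega)]
    push_cast
    ring

theorem stmt_14 (n k : ℕ) (h : n ≤ 2 ^ k) :
    D (2 ^ (k + 1) + n - 1) = 2 ^ k - n + D (2 ^ k + n - 1) := by
  rw [Nat.sub_add_comm (k + 1).one_le_two_pow, Nat.sub_add_comm k.one_le_two_pow]
  exact D_two_pow_succ_sub_one_add h
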